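/- For every K ∈ ℝ, x > 0 and q > 0, define the piecewise function m : ℝ → ℝ by m(ξ) = K − ξ − x/2 for ξ ≤ K − x, m(ξ) = (K − ξ)²/(2x) for K − x < ξ < K, and m(ξ) = 0 for ξ ≥ K. Then −2·∫_ℝ m(ξ)·(1/√(2πq)) e^{−ξ²/(2q)} dξ = −√(q/(2π))·[((x − K)/x)·e^{−(x−K)²/(2q)} + (K/x)·e^{−K²/(2q)}] + ((x − K)² + q)/x · H((x − K)/√q) − (K² + q)/x · H(−K/√q). -/

import Mathlib

open Real

section GaussianMoreauAux

open MeasureTheory Filter Set intervalIntegral Topology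

noncomputable def gTail (z : ℝ) : ℝ :=
  (1 / Real.sqrt (2 * π)) * ∫ t in Set.Ioi z, Real.exp (-t ^ 2 / 2)

lemma gauss_integrable : Integrable (fun t : ℝ => Real.exp (-t ^ 2 / 2)) := by
  have h := integrable_exp_neg_mul_sq (b := 1/2) (by norm_num)
  refine h.congr (Filter.Eventually.of_forall fun t => ?_)
  ring_nf

lemma gauss_total : (∫ t : ℝ, Real.exp (-t ^ 2 / 2)) = Real.sqrt (2 * π) := by
  have h := integral_gaussian (1/2)
  have e : ∀ t : ℝ, Real.exp (-(1/2) * t ^ 2) = Real.exp (-t ^ 2 / 2) := fun t => by ring_nf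
  rw [show (∫ t : ℝ, Real.exp (-t ^ 2 / 2)) = ∫ t : ℝ, Real.exp (-(1/2) * t ^ 2) by
        exact integral_congr_ae (Filter.Eventually.of_forall fun t => (e t).symm),
      h]
  congr 1
  rw [eq_comm, div_div_eq_mul_div]
  norm_num [mul_comm]

lemma gTail_eq (z : ℝ) : gTail z
    = gTail 0 - (1 / Real.sqrt (2 * π)) * ∫ t in (0:ℝ)..z, Real.exp (-t ^ 2 / 2) := by
  have h0 : ∀ w : ℝ, (∫ t in Set.Ioi w, Real.exp (-t ^ 2 / 2))
      = (∫ t : ℝ, Real.exp (-t ^ 2 / 2)) - ∫ t in Set.Iic w, Real.exp (-t ^ 2 / 2) := by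
    intro w
    rw [← intervalIntegral.integral_Iic_add_Ioi (gauss_integrable.integrableOn)
      (gauss_integrable.integrableOn)]
    ring
  have h1 := intervalIntegral.integral_Iic_sub_Iic (f := fun t : ℝ => Real.exp (-t ^ 2 / 2))
    (μ := volume) (a := 0) (b := z) gauss_integrable.integrableOn gauss_integrable.integrableOn
  unfold gTail
  rw [h0 z, h0 0, ← h1]
  ring

lemma gTail_hasDerivAt (z : ℝ) :
    HasDerivAt gTail (-((1 / Real.sqrt (2 * π)) * Real.exp (-z ^ 2 / 2))) z := by
  have hint : HasDerivAt (fun u => ∫ t in (0:ℝ)..u, Real.exp (-t ^ 2 / 2))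
      (Real.exp (-z ^ 2 / 2)) z := by
    refine intervalIntegral.integral_hasDerivAt_right
      gauss_integrable.intervalIntegrable ?_ ?_
    · exact (Real.continuous_exp.comp (by continuity)).stronglyMeasurableAtFilter _ _
    · exact (Real.continuous_exp.comp (by continuity)).continuousAt
  have : HasDerivAt (fun u => gTail 0 - (1 / Real.sqrt (2 * π)) * ∫ t in (0:ℝ)..u,
      Real.exp (-t ^ 2 / 2)) (-((1 / Real.sqrt (2 * π)) * Real.exp (-z ^ 2 / 2))) z := by
    simpa using ((hint.const_mul (1 / Real.sqrt (2 * π))).const_sub (gTail 0))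
  exact this.congr_of_eventuallyEq (Filter.Eventually.of_forall fun u => (gTail_eq u))

lemma gTail_neg (z : ℝ) : gTail (-z) = 1 - gTail z := by
  have heven : ∀ t : ℝ, Real.exp (-(-t) ^ 2 / 2) = Real.exp (-t ^ 2 / 2) := fun t => by ring_nf
  have h1 : (∫ t in Set.Ioi (-z), Real.exp (-t ^ 2 / 2))
      = ∫ t in Set.Iic z, Real.exp (-t ^ 2 / 2) := by
    rw [← _root_.integral_comp_neg_Iic z]
    exact MeasureTheory.integral_congr_ae (Filter.Eventually.of_forall fun t => heven t)
  have h2 := intervalIntegral.integral_Iic_add_Ioi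
    (f := fun t : ℝ => Real.exp (-t ^ 2 / 2)) (μ := volume) (b := z)
    gauss_integrable.integrableOn gauss_integrable.integrableOn
  have hπ : Real.sqrt (2 * π) ≠ 0 := by positivity
  have h3 : (∫ t in Set.Iic z, Real.exp (-t ^ 2 / 2))
      = Real.sqrt (2 * π) - ∫ t in Set.Ioi z, Real.exp (-t ^ 2 / 2) := by
    rw [gauss_total] at h2; linarith [h2]
  calc gTail (-z) = (1 / Real.sqrt (2 * π)) * ∫ t in Set.Iic z, Real.exp (-t ^ 2 / 2) := by
        unfold gTail; rw [h1]
    _ = (1 / Real.sqrt (2 * π)) * (Real.sqrt (2 * π) - ∫ t in Set.Ioi z, Real.exp (-t ^ 2 / 2)) := by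
        rw [h3]
    _ = 1 - gTail z := by
        unfold gTail; rw [mul_sub, one_div, inv_mul_cancel₀ hπ]

lemma gTail_atTop : Tendsto gTail atTop (𝓝 0) := by
  have h1 : Tendsto (fun z : ℝ => ∫ t in (0:ℝ)..z, Real.exp (-t ^ 2 / 2)) atTop
      (𝓝 (∫ t in Set.Ioi (0:ℝ), Real.exp (-t ^ 2 / 2))) :=
    intervalIntegral_tendsto_integral_Ioi 0 gauss_integrable.integrableOn tendsto_id
  have h2 : Tendsto gTail atTop
      (𝓝 (gTail 0 - (1 / Real.sqrt (2 * π)) * ∫ t in Set.Ioi (0:ℝ), Real.exp (-t ^ 2 / 2))) := by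
    have := (h1.const_mul (1 / Real.sqrt (2 * π))).const_sub (gTail 0)
    exact this.congr fun z => (gTail_eq z).symm
  have : gTail 0 - (1 / Real.sqrt (2 * π)) * ∫ t in Set.Ioi (0:ℝ), Real.exp (-t ^ 2 / 2) = 0 := by
    unfold gTail; ring
  rwa [this] at h2

lemma gTail_atBot : Tendsto gTail atBot (𝓝 1) := by
  have h1 : Tendsto (fun z : ℝ => ∫ t in z..(0:ℝ), Real.exp (-t ^ 2 / 2)) atBot
      (𝓝 (∫ t in Set.Iic (0:ℝ), Real.exp (-t ^ 2 / 2))) :=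
    intervalIntegral_tendsto_integral_Iic 0 gauss_integrable.integrableOn tendsto_id
  have h1' : Tendsto (fun z : ℝ => ∫ t in (0:ℝ)..z, Real.exp (-t ^ 2 / 2)) atBot
      (𝓝 (-∫ t in Set.Iic (0:ℝ), Real.exp (-t ^ 2 / 2))) := by
    have := h1.neg
    refine this.congr fun z => ?_
    rw [intervalIntegral.integral_symm, neg_neg]
  have h2 : Tendsto gTail atBot
      (𝓝 (gTail 0 - (1 / Real.sqrt (2 * π)) *
        (-∫ t in Set.Iic (0:ℝ), Real.exp (-t ^ 2 / 2)))) := by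
    have := (h1'.const_mul (1 / Real.sqrt (2 * π))).const_sub (gTail 0)
    exact this.congr fun z => (gTail_eq z).symm
  have hval : gTail 0 - (1 / Real.sqrt (2 * π)) *
      (-∫ t in Set.Iic (0:ℝ), Real.exp (-t ^ 2 / 2)) = 1 := by
    have h2' := intervalIntegral.integral_Iic_add_Ioi
      (f := fun t : ℝ => Real.exp (-t ^ 2 / 2)) (μ := volume) (b := (0:ℝ))
      gauss_integrable.integrableOn gauss_integrable.integrableOn
    rw [gauss_total] at h2'
    have hπ : Real.sqrt (2 * π) ≠ 0 := by positivity
    unfold gTail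
    have : (∫ t in Set.Ioi (0:ℝ), Real.exp (-t ^ 2 / 2))
        + (∫ t in Set.Iic (0:ℝ), Real.exp (-t ^ 2 / 2)) = Real.sqrt (2 * π) := by
      linarith [h2']
    rw [mul_neg, sub_neg_eq_add, ← mul_add, this, one_div, inv_mul_cancel₀ hπ]
  rwa [hval] at h2

noncomputable def φg (q ξ : ℝ) : ℝ := (1 / Real.sqrt (2 * π * q)) * Real.exp (-ξ ^ 2 / (2 * q))

lemma exp_arg_eq (q : ℝ) (hq : 0 < q) (ξ : ℝ) :
    Real.exp (-ξ ^ 2 / (2 * q)) = Real.exp (-(1 / (2 * q)) * ξ ^ 2) := by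
  congr 1; field_simp

lemma φg_int {q : ℝ} (hq : 0 < q) : Integrable (φg q) := by
  have h := (integrable_exp_neg_mul_sq (b := 1 / (2 * q)) (by positivity)).const_mul
    (1 / Real.sqrt (2 * π * q))
  exact h.congr (Filter.Eventually.of_forall fun ξ => by
    unfold φg; rw [exp_arg_eq q hq])

lemma xφg_int {q : ℝ} (hq : 0 < q) : Integrable (fun ξ => ξ * φg q ξ) := by
  have h := (integrable_mul_exp_neg_mul_sq (b := 1 / (2 * q)) (by positivity)).const_mul
    (1 / Real.sqrt (2 * π * q))
  exact h.congr (Filter.Eventually.of_forall fun ξ => by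
    simp only [φg, ← exp_arg_eq q hq]; ring)

lemma φg_hasDerivAt {q : ℝ} (hq : 0 < q) (ξ : ℝ) :
    HasDerivAt (φg q) (-(ξ / q) * φg q ξ) ξ := by
  have h := (((hasDerivAt_pow 2 ξ).neg.div_const (2 * q)).exp).const_mul
    (1 / Real.sqrt (2 * π * q))
  refine h.congr_deriv ?_
  unfold φg
  simp only [Pi.neg_apply]
  have hq' : q ≠ 0 := ne_of_gt hq
  field_simp
  ring

lemma gTail_scaled_hasDerivAt {q : ℝ} (hq : 0 < q) (ξ : ℝ) :
    HasDerivAt (fun u => gTail (u / Real.sqrt q)) (-(φg q ξ)) ξ := by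
  have hs : (0:ℝ) < Real.sqrt q := Real.sqrt_pos.2 hq
  have h := (gTail_hasDerivAt (ξ / Real.sqrt q)).comp ξ ((hasDerivAt_id ξ).div_const
    (Real.sqrt q))
  refine h.congr_deriv ?_
  have harg : -(ξ / Real.sqrt q) ^ 2 / 2 = -ξ ^ 2 / (2 * q) := by
    rw [div_pow, Real.sq_sqrt hq.le]
    ring
  have hsq : Real.sqrt (2 * π * q) = Real.sqrt (2 * π) * Real.sqrt q := by
    rw [Real.sqrt_mul (by positivity)]
  unfold φg
  rw [harg, hsq]
  have hπ : Real.sqrt (2 * π) ≠ 0 := by positivity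
  field_simp

lemma φg_atBot {q : ℝ} (hq : 0 < q) : Tendsto (φg q) atBot (𝓝 0) := by
  have t1 : Tendsto (fun ξ : ℝ => ξ * ξ) atBot atTop := tendsto_id.atBot_mul_atBot₀ tendsto_id
  have t2 : Tendsto (fun ξ : ℝ => ξ * ξ / (2 * q)) atBot atTop :=
    t1.atTop_div_const (by positivity)
  have t3 : Tendsto (fun ξ : ℝ => -(ξ * ξ / (2 * q))) atBot atBot :=
    tendsto_neg_atTop_atBot.comp t2
  have t4 : Tendsto (fun ξ : ℝ => Real.exp (-ξ ^ 2 / (2 * q))) atBot (𝓝 0) := by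
    have := Real.tendsto_exp_atBot.comp t3
    refine this.congr fun ξ => ?_
    simp only [Function.comp]
    congr 1; ring
  have h5 := t4.const_mul (1 / Real.sqrt (2 * π * q))
  rw [mul_zero] at h5
  exact h5.congr fun ξ => by rw [φg]

lemma sqrt_q_div_two_pi {q : ℝ} (hq : 0 < q) :
    Real.sqrt (q / (2 * π)) = q * (1 / Real.sqrt (2 * π * q)) := by
  have h1 : q / (2 * π) = q ^ 2 / (2 * π * q) := by
    field_simp
  rw [h1, Real.sqrt_div (by positivity), Real.sqrt_sq hq.le]
  ring

noncomputable def Aone (K x q ξ : ℝ) : ℝ :=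
  -(K - x / 2) * gTail (ξ / Real.sqrt q) + q * φg q ξ

noncomputable def Atwo (K x q ξ : ℝ) : ℝ :=
  (-(K ^ 2 + q) * gTail (ξ / Real.sqrt q) + q * (2 * K - ξ) * φg q ξ) / (2 * x)

lemma Aone_hasDerivAt (K x q : ℝ) (hq : 0 < q) (ξ : ℝ) :
    HasDerivAt (Aone K x q) ((K - ξ - x / 2) * φg q ξ) ξ := by
  have h := (HasDerivAt.const_mul (-(K - x / 2)) (gTail_scaled_hasDerivAt hq ξ)).add
    (HasDerivAt.const_mul q (φg_hasDerivAt hq ξ))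
  have heq : (K - ξ - x / 2) * φg q ξ
      = -(K - x / 2) * -φg q ξ + q * (-(ξ / q) * φg q ξ) := by
    have h1 : q * (-(ξ / q) * φg q ξ) = -ξ * φg q ξ := by
      field_simp
    rw [h1]; ring
  rw [heq]
  exact h

lemma Atwo_hasDerivAt (K x q : ℝ) (hq : 0 < q) (ξ : ℝ) :
    HasDerivAt (Atwo K x q) ((K - ξ) ^ 2 / (2 * x) * φg q ξ) ξ := by
  have hl : HasDerivAt (fun u : ℝ => q * (2 * K - u)) (q * (0 - 1)) ξ :=
    HasDerivAt.const_mul q ((hasDerivAt_const ξ (2 * K)).sub (hasDerivAt_id ξ))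
  have hprod := hl.mul (φg_hasDerivAt hq ξ)
  have h := ((HasDerivAt.const_mul (-(K ^ 2 + q)) (gTail_scaled_hasDerivAt hq ξ)).add
    hprod).div_const (2 * x)
  have heq : (K - ξ) ^ 2 / (2 * x) * φg q ξ
      = (-(K ^ 2 + q) * -φg q ξ + (q * (0 - 1) * φg q ξ
          + q * (2 * K - ξ) * (-(ξ / q) * φg q ξ))) / (2 * x) := by
    have h1 : q * (2 * K - ξ) * (-(ξ / q) * φg q ξ) = (2 * K - ξ) * (-ξ) * φg q ξ := by
      field_simp
    rw [h1]; ring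
  rw [heq]
  exact h

end GaussianMoreauAux

open MeasureTheory Filter Set intervalIntegral Topology in
/-- Gaussian average of the piecewise Moreau envelope m(ξ) gives the
closed-form energetic contribution G of one class to the zero-temperature
replica free energy. -/
theorem gaussian_average_moreau_closed_form
    (K x q : ℝ) (hx : 0 < x) (hq : 0 < q)
    (H m : ℝ → ℝ)
    (hH : ∀ z, H z = (1 / Real.sqrt (2 * π)) * ∫ t in Set.Ioi z, Real.exp (-t ^ 2 / 2))
    (hm : ∀ ξ, m ξ = if ξ ≤ K - x then K - ξ - x / 2
                     else if ξ < K then (K - ξ) ^ 2 / (2 * x)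
                     else 0) :
    -2 * ∫ ξ : ℝ, m ξ * ((1 / Real.sqrt (2 * π * q)) * Real.exp (-ξ ^ 2 / (2 * q)))
      = -Real.sqrt (q / (2 * π))
          * ((x - K) / x * Real.exp (-(x - K) ^ 2 / (2 * q))
             + K / x * Real.exp (-K ^ 2 / (2 * q)))
        + ((x - K) ^ 2 + q) / x * H ((x - K) / Real.sqrt q)
        - (K ^ 2 + q) / x * H (-K / Real.sqrt q) := by
  have hHg : ∀ z, H z = gTail z := fun z => hH z
  have haK : K - x ≤ K := by linarith
  -- integrability of the pieces
  have hf1_int : Integrable (fun ξ => (K - ξ - x / 2) * φg q ξ) := by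
    have h := ((φg_int hq).const_mul (K - x / 2)).sub (xφg_int hq)
    exact h.congr (Filter.Eventually.of_forall fun ξ => by
      simp only [Pi.sub_apply]; ring)
  have hφc : Continuous (φg q) := by
    unfold φg; fun_prop
  have hf2c : Continuous (fun ξ => (K - ξ) ^ 2 / (2 * x) * φg q ξ) := by fun_prop
  -- piecewise identification
  have hEq1 : Set.EqOn (fun ξ => m ξ * φg q ξ) (fun ξ => (K - ξ - x / 2) * φg q ξ)
      (Set.Iic (K - x)) := by
    intro ξ hξ
    have h1 : ξ ≤ K - x := hξ
    simp only
    rw [hm ξ, if_pos h1]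
  have hEq2 : Set.EqOn (fun ξ => m ξ * φg q ξ) (fun ξ => (K - ξ) ^ 2 / (2 * x) * φg q ξ)
      (Set.Ioc (K - x) K) := by
    intro ξ hξ
    simp only
    rw [hm ξ, if_neg (not_le.2 hξ.1)]
    rcases lt_or_eq_of_le hξ.2 with h | h
    · rw [if_pos h]
    · subst h
      simp
  have hEq3 : Set.EqOn (fun ξ => m ξ * φg q ξ) (fun _ => (0:ℝ)) (Set.Ioi K) := by
    intro ξ hξ
    have h1 : ¬ ξ ≤ K - x := by simp only [Set.mem_Ioi] at hξ; linarith
    have h2 : ¬ ξ < K := by simp only [Set.mem_Ioi] at hξ; linarith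
    simp only
    rw [hm ξ, if_neg h1, if_neg h2, zero_mul]
  -- IntegrableOn pieces
  have hfIic : IntegrableOn (fun ξ => m ξ * φg q ξ) (Set.Iic (K - x)) :=
    (hf1_int.integrableOn).congr_fun (fun ξ hξ => (hEq1 hξ).symm) measurableSet_Iic
  have hfIoc : IntegrableOn (fun ξ => m ξ * φg q ξ) (Set.Ioc (K - x) K) :=
    (hf2c.integrableOn_Ioc).congr_fun (fun ξ hξ => (hEq2 hξ).symm) measurableSet_Ioc
  have hfIoi : IntegrableOn (fun ξ => m ξ * φg q ξ) (Set.Ioi K) :=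
    ((integrable_zero ℝ ℝ (volume : Measure ℝ)).integrableOn).congr_fun
      (fun ξ hξ => (hEq3 hξ).symm) measurableSet_Ioi
  have hfIoi' : IntegrableOn (fun ξ => m ξ * φg q ξ) (Set.Ioi (K - x)) := by
    rw [← Set.Ioc_union_Ioi_eq_Ioi haK]
    exact hfIoc.union hfIoi
  -- splitting the integral
  have hsplit1 : (∫ ξ : ℝ, m ξ * φg q ξ)
      = (∫ ξ in Set.Iic (K - x), m ξ * φg q ξ) + ∫ ξ in Set.Ioi (K - x), m ξ * φg q ξ :=
    (intervalIntegral.integral_Iic_add_Ioi hfIic hfIoi').symm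
  have hsplit2 : (∫ ξ in Set.Ioi (K - x), m ξ * φg q ξ)
      = (∫ ξ in Set.Ioc (K - x) K, m ξ * φg q ξ) + ∫ ξ in Set.Ioi K, m ξ * φg q ξ := by
    rw [← Set.Ioc_union_Ioi_eq_Ioi haK]
    exact MeasureTheory.setIntegral_union (Set.Ioc_disjoint_Ioi le_rfl)
      measurableSet_Ioi hfIoc hfIoi
  -- value on (-∞, K - x]
  have hlimA1 : Tendsto (Aone K x q) atBot (𝓝 (-(K - x / 2))) := by
    have hdiv : Tendsto (fun ξ : ℝ => ξ / Real.sqrt q) atBot atBot :=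
      tendsto_id.atBot_div_const (Real.sqrt_pos.2 hq)
    have h1 := (gTail_atBot.comp hdiv).const_mul (-(K - x / 2))
    have h2 := (φg_atBot hq).const_mul q
    have h3 := h1.add h2
    simp only [mul_one, mul_zero, add_zero] at h3
    exact h3
  have hJ1 : (∫ ξ in Set.Iic (K - x), (K - ξ - x / 2) * φg q ξ)
      = Aone K x q (K - x) - (-(K - x / 2)) :=
    MeasureTheory.integral_Iic_of_hasDerivAt_of_tendsto'
      (fun ξ _ => Aone_hasDerivAt K x q hq ξ) hf1_int.integrableOn hlimA1
  have hv1 : (∫ ξ in Set.Iic (K - x), m ξ * φg q ξ)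
      = Aone K x q (K - x) - (-(K - x / 2)) := by
    rw [MeasureTheory.setIntegral_congr_fun measurableSet_Iic hEq1, hJ1]
  -- value on (K - x, K]
  have hJ2 : (∫ ξ in (K - x)..K, (K - ξ) ^ 2 / (2 * x) * φg q ξ)
      = Atwo K x q K - Atwo K x q (K - x) :=
    intervalIntegral.integral_eq_sub_of_hasDerivAt
      (fun t _ => Atwo_hasDerivAt K x q hq t) (hf2c.intervalIntegrable _ _)
  have hv2 : (∫ ξ in Set.Ioc (K - x) K, m ξ * φg q ξ)
      = Atwo K x q K - Atwo K x q (K - x) := by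
    rw [MeasureTheory.setIntegral_congr_fun measurableSet_Ioc hEq2,
      ← intervalIntegral.integral_of_le haK, hJ2]
  -- value on (K, ∞)
  have hv3 : (∫ ξ in Set.Ioi K, m ξ * φg q ξ) = 0 := by
    rw [MeasureTheory.setIntegral_congr_fun measurableSet_Ioi hEq3]
    simp
  -- assemble
  have htotal : (∫ ξ : ℝ, m ξ * φg q ξ)
      = (Aone K x q (K - x) - (-(K - x / 2))) + (Atwo K x q K - Atwo K x q (K - x)) := by
    rw [hsplit1, hsplit2, hv1, hv2, hv3]; ring
  have hgoal : (-2 : ℝ) * ∫ ξ : ℝ, m ξ * φg q ξ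
      = -Real.sqrt (q / (2 * π))
          * ((x - K) / x * Real.exp (-(x - K) ^ 2 / (2 * q))
             + K / x * Real.exp (-K ^ 2 / (2 * q)))
        + ((x - K) ^ 2 + q) / x * H ((x - K) / Real.sqrt q)
        - (K ^ 2 + q) / x * H (-K / Real.sqrt q) := by
    rw [htotal]
    have e1 : H ((x - K) / Real.sqrt q) = 1 - gTail ((K - x) / Real.sqrt q) := by
      rw [hHg, show (x - K) / Real.sqrt q = -((K - x) / Real.sqrt q) by ring, gTail_neg]
    have e2 : H (-K / Real.sqrt q) = 1 - gTail (K / Real.sqrt q) := by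
      rw [hHg, show -K / Real.sqrt q = -(K / Real.sqrt q) by ring, gTail_neg]
    have e3 : -((x:ℝ) - K) ^ 2 / (2 * q) = -(K - x) ^ 2 / (2 * q) := by ring
    rw [e1, e2, e3, sqrt_q_div_two_pi hq]
    unfold Aone Atwo φg
    have hs : Real.sqrt (2 * π * q) ≠ 0 := by positivity
    field_simp
    ring
  exact hgoal
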